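/- arXiv:2112.04210 — 2 statements merged into one kernel-verified Lean document; each statement's English description precedes it below -/
import Mathlib

section
/- With d = deg π, let P ∈ 𝔽_𝔭[U,V] be a nonzero homogeneous polynomial of total degree m. Then there exists a nonzero homogeneous polynomial Q ∈ 𝔽_𝔭[U,V] of total degree strictly less than m with P − Q in the ideal generated by φ̄_d − 1 if and only if φ̄_d divides P in 𝔽_𝔭[U,V]. -/
open MvPolynomial

/-- The isobaric polynomials `φ_d ∈ A[U,V]` (with `A = 𝔽_q[T]`), defined by the recursion
`φ_0 = 1`, `φ_1 = U − T^q·V`, and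
`φ_d = φ_{d−1}·(U − T^q·V)^{q^{d−1}} + (T^{q^{d−1}} − T)·φ_{d−2}·(U^q·V)^{q^{d−2}}` for `d ≥ 2`.
Here `U = X 0`, `V = X 1` and `T = Polynomial.X`. -/
noncomputable def phiPoly (Fq : Type) [Field Fq] (q : ℕ) :
    ℕ → MvPolynomial (Fin 2) (Polynomial Fq)
  | 0 => 1
  | 1 => X 0 - C (Polynomial.X ^ q) * X 1
  | (d + 2) =>
      phiPoly Fq q (d + 1) * (X 0 - C (Polynomial.X ^ q) * X 1) ^ q ^ (d + 1) +
        C (Polynomial.X ^ (q ^ (d + 1)) - Polynomial.X) * phiPoly Fq q d *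
          (X 0 ^ q * X 1) ^ q ^ d

/-!
Over the domain `𝔽_𝔭`, `φ̄_d` is nonzero (as `φ_d(1, 0) = 1`) and homogeneous of degree
`D = 1 + q + ⋯ + q^{d-1} ≥ 1`, and this is all that matters. If `P = φ F`, then `F` is
homogeneous of degree `m - D < m` and `P - F = (φ - 1) F`. Conversely, if `P - Q = (φ - 1) F`
with `Q` of lower degree, then the top-degree part of `(φ - 1) F` is `φ` times that of `F`, so
`D + deg F ≤ m`, and comparing the components of degree `m` gives `P = φ F_{m - D}`.
-/

namespace MvPolynomial

variable {σ R : Type*}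

section CommRing

variable [CommRing R]

theorem isHomogeneous_of_homogeneousComponent_eq_zero {F : MvPolynomial σ R} {n : ℕ}
    (h : ∀ j ≠ n, homogeneousComponent j F = 0) : F.IsHomogeneous n := by
  rw [← sum_homogeneousComponent F]
  refine IsHomogeneous.sum _ _ _ fun j _ => ?_
  obtain rfl | hj := eq_or_ne j n
  · exact homogeneousComponent_isHomogeneous j F
  · rw [h j hj]
    exact isHomogeneous_zero σ R n

theorem IsHomogeneous.homogeneousComponent_add_mul {φ : MvPolynomial σ R} {D : ℕ}
    (hφ : φ.IsHomogeneous D) (F : MvPolynomial σ R) (n : ℕ) :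
    homogeneousComponent (n + D) (φ * F) = φ * homogeneousComponent n F := by
  induction F using MvPolynomial.induction_on' with
  | monomial u a =>
    have hu : (monomial u a).IsHomogeneous u.degree := isHomogeneous_monomial a rfl
    rw [homogeneousComponent_of_mem (hφ.mul hu), homogeneousComponent_of_mem hu]
    by_cases h : n = u.degree
    · rw [if_pos (by omega), if_pos h]
    · rw [if_neg (by omega), if_neg h, mul_zero]
  | add F G hF hG => rw [mul_add, map_add, map_add, hF, hG, mul_add]

end CommRing

section IsDomain

variable [CommRing R] [IsDomain R] {φ F P Q : MvPolynomial σ R} {D m n : ℕ}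

theorem IsHomogeneous.of_mul_left (hφ : φ.IsHomogeneous D) (hφ0 : φ ≠ 0)
    (hφF : (φ * F).IsHomogeneous m) : F.IsHomogeneous (m - D) :=
  isHomogeneous_of_homogeneousComponent_eq_zero fun j hj => by
    have h := hφ.homogeneousComponent_add_mul F j
    rw [homogeneousComponent_of_mem hφF, if_neg (by omega)] at h
    exact (mul_eq_zero.mp h.symm).resolve_left hφ0

theorem totalDegree_mul_sub_self (hφ : 0 < φ.totalDegree) (hF : F ≠ 0) :
    (φ * F - F).totalDegree = φ.totalDegree + F.totalDegree := by
  have hφ0 : φ ≠ 0 := by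
    rintro rfl
    simp at hφ
  have hφF : (φ * F).totalDegree = φ.totalDegree + F.totalDegree :=
    totalDegree_mul_of_isDomain hφ0 hF
  rw [sub_eq_add_neg, totalDegree_add_eq_left_of_totalDegree_lt (by rw [totalDegree_neg]; omega),
    hφF]

theorem IsHomogeneous.exists_lower_degree_of_dvd (hφ : φ.IsHomogeneous D) (hφ0 : φ ≠ 0)
    (hD : 0 < D) (hP : P ≠ 0) (hPm : P.IsHomogeneous m) (hφP : φ ∣ P) :
    ∃ Q n, Q ≠ 0 ∧ Q.IsHomogeneous n ∧ n < m ∧ P - Q ∈ Ideal.span {φ - 1} := by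
  obtain ⟨F, rfl⟩ := hφP
  have hF0 : F ≠ 0 := right_ne_zero_of_mul hP
  have hF : F.IsHomogeneous (m - D) := hφ.of_mul_left hφ0 hPm
  have hdeg : (φ * F).totalDegree = D + (m - D) := by
    rw [totalDegree_mul_of_isDomain hφ0 hF0, hφ.totalDegree hφ0, hF.totalDegree hF0]
  rw [hPm.totalDegree hP] at hdeg
  refine ⟨F, m - D, hF0, hF, by omega, Ideal.mem_span_singleton'.mpr ⟨F, by ring⟩⟩

theorem IsHomogeneous.dvd_of_sub_mem_span_sub_one (hφ : φ.IsHomogeneous D) (hφ0 : φ ≠ 0)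
    (hD : 0 < D) (hP : P ≠ 0) (hPm : P.IsHomogeneous m) (hQn : Q.IsHomogeneous n) (hnm : n < m)
    (hmem : P - Q ∈ Ideal.span {φ - 1}) : φ ∣ P := by
  obtain ⟨F, hF⟩ := Ideal.mem_span_singleton'.mp hmem
  have hφF : φ * F - F = P - Q := by rw [← hF]; ring
  have hF0 : F ≠ 0 := by
    rintro rfl
    have hPQ : P = Q := sub_eq_zero.mp (by simpa using hφF.symm)
    exact hnm.ne' (hPm.inj_right (hPQ ▸ hQn) hP)
  have hdeg : D + F.totalDegree ≤ m := by
    calc D + F.totalDegree = (P - Q).totalDegree := by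
          rw [← hφF, totalDegree_mul_sub_self (by rwa [hφ.totalDegree hφ0]) hF0,
            hφ.totalDegree hφ0]
      _ ≤ m := (totalDegree_sub P Q).trans
          (max_le hPm.totalDegree_le (hQn.totalDegree_le.trans hnm.le))
  have hFm : homogeneousComponent m F = 0 := homogeneousComponent_eq_zero m F (by omega)
  refine ⟨homogeneousComponent (m - D) F, ?_⟩
  have h := hφ.homogeneousComponent_add_mul F (m - D)
  rw [Nat.sub_add_cancel (by omega), eq_add_of_sub_eq hφF, map_add, map_sub,
    homogeneousComponent_eq_self hPm, homogeneousComponent_of_mem hQn, if_neg hnm.ne',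
    hFm, sub_zero, add_zero] at h
  exact h

theorem IsHomogeneous.exists_lower_degree_iff_dvd (hφ : φ.IsHomogeneous D) (hφ0 : φ ≠ 0)
    (hD : 0 < D) (hP : P ≠ 0) (hPm : P.IsHomogeneous m) :
    (∃ Q n, Q ≠ 0 ∧ Q.IsHomogeneous n ∧ n < m ∧ P - Q ∈ Ideal.span {φ - 1}) ↔ φ ∣ P :=
  ⟨fun ⟨_, _, _, hQn, hnm, hmem⟩ => hφ.dvd_of_sub_mem_span_sub_one hφ0 hD hP hPm hQn hnm hmem,
    hφ.exists_lower_degree_of_dvd hφ0 hD hP hPm⟩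

end IsDomain

end MvPolynomial

section phiPoly

variable (Fq : Type) [Field Fq] (q : ℕ)

theorem isHomogeneous_phiPoly (d : ℕ) :
    (phiPoly Fq q d).IsHomogeneous (∑ i ∈ Finset.range d, q ^ i) := by
  have hL : (X 0 - C (Polynomial.X ^ q) * X 1 :
      MvPolynomial (Fin 2) (Polynomial Fq)).IsHomogeneous 1 := by
    simpa using (isHomogeneous_X _ 0).sub
      ((isHomogeneous_C (Fin 2) ((Polynomial.X : Polynomial Fq) ^ q)).mul (isHomogeneous_X _ 1))
  have hM : (X 0 ^ q * X 1 : MvPolynomial (Fin 2) (Polynomial Fq)).IsHomogeneous (q + 1) :=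
    (isHomogeneous_X_pow 0 q).mul (isHomogeneous_X _ 1)
  induction d using Nat.twoStepInduction with
  | zero => simpa [phiPoly] using isHomogeneous_one (Fin 2) (Polynomial Fq)
  | one => simpa [phiPoly] using hL
  | more d ih₀ ih₁ =>
    have h₁ := ih₁.mul (hL.pow (q ^ (d + 1)))
    have h₂ := ((isHomogeneous_C _ (Polynomial.X ^ q ^ (d + 1) - Polynomial.X)).mul ih₀).mul
      (hM.pow (q ^ d))
    have e₁ : (∑ i ∈ Finset.range (d + 1), q ^ i) + 1 * q ^ (d + 1) =
        ∑ i ∈ Finset.range (d + 2), q ^ i := by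
      rw [Finset.sum_range_succ (n := d + 1)]; ring
    have e₂ : (0 + ∑ i ∈ Finset.range d, q ^ i) + (q + 1) * q ^ d =
        ∑ i ∈ Finset.range (d + 2), q ^ i := by
      rw [Finset.sum_range_succ (n := d + 1), Finset.sum_range_succ (n := d)]; ring
    rw [e₁] at h₁
    rw [e₂] at h₂
    exact h₁.add h₂

variable {Fq q}

theorem eval_map_phiPoly_single_zero_one {S : Type*} [CommRing S] (hq : 0 < q)
    (f : Polynomial Fq →+* S) (d : ℕ) :
    eval (Pi.single 0 1) (map f (phiPoly Fq q d)) = 1 := by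
  induction d using Nat.twoStepInduction with
  | zero => simp [phiPoly]
  | one => simp [phiPoly]
  | more d ih₀ ih₁ => simp [phiPoly, ih₀, ih₁, zero_pow (pow_ne_zero d hq.ne')]

theorem map_phiPoly_ne_zero {S : Type*} [CommRing S] [Nontrivial S] (hq : 0 < q)
    (f : Polynomial Fq →+* S) (d : ℕ) : map f (phiPoly Fq q d) ≠ 0 := fun h => by
  simpa [h] using eval_map_phiPoly_single_zero_one hq f d

end phiPoly

/-- With `d = deg π`, let `P ∈ 𝔽_𝔭[U,V]` be a nonzero homogeneous polynomial of total degree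
`m`.  There exists a nonzero homogeneous polynomial `Q` of total degree `< m` with `P − Q`
in the ideal generated by `φ̄_d − 1` if and only if `φ̄_d` divides `P`. -/
theorem exists_lower_degree_iff_dvd (q : ℕ)
    (Fq : Type) [Field Fq] [Fintype Fq] (hcard : Fintype.card Fq = q)
    (π : Polynomial Fq) (hirr : Irreducible π)
    (P : MvPolynomial (Fin 2) (Polynomial Fq ⧸ Ideal.span {π})) (m : ℕ)
    (hP : P ≠ 0) (hPhom : P.IsHomogeneous m) :
    (∃ (Q : MvPolynomial (Fin 2) (Polynomial Fq ⧸ Ideal.span {π})) (n : ℕ),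
        Q ≠ 0 ∧ Q.IsHomogeneous n ∧ n < m ∧
          P - Q ∈ Ideal.span
            {MvPolynomial.map (Ideal.Quotient.mk (Ideal.span {π}))
              (phiPoly Fq q π.natDegree) - 1}) ↔
      MvPolynomial.map (Ideal.Quotient.mk (Ideal.span {π})) (phiPoly Fq q π.natDegree)
        ∣ P := by
  have : (Ideal.span {π}).IsMaximal := PrincipalIdealRing.isMaximal_of_irreducible hirr
  have hq : 0 < q := hcard ▸ Fintype.card_pos
  refine ((isHomogeneous_phiPoly Fq q _).map _).exists_lower_degree_iff_dvd
    (map_phiPoly_ne_zero hq _ _) ?_ hP hPhom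
  exact Finset.sum_pos (fun i _ => pow_pos hq i)
    (Finset.nonempty_range_iff.mpr hirr.natDegree_pos.ne')
end

section
/- With d = deg π and ψ_d := −U·(∂φ_d/∂U) ∈ A[U,V], the reductions ψ̄_d and φ̄_d share no common non-unit factor in 𝔽_𝔭[U,V]; that is, every polynomial dividing both φ̄_d and ψ̄_d is a unit. -/
open MvPolynomial

/-- The isobaric polynomial `ψ_d := −U·(∂φ_d/∂U) ∈ A[U,V]`, the unique isobaric polynomial
with `∂(g_d) = ψ_d(Δ_W, Δ_T)·E_T`. -/
noncomputable def psiPoly (Fq : Type) [Field Fq] (q : ℕ) (d : ℕ) :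
    MvPolynomial (Fin 2) (Polynomial Fq) :=
  - (X 0) * MvPolynomial.pderiv 0 (phiPoly Fq q d)

/-!
Because `q = 0` in `𝔽_q`, the factors `(U - T^q V)^(q^k)` and `(U^q V)^(q^k)` of the recursion are
constants for `∂/∂U`, so `ψ_d` satisfies the same three-term recursion as `φ_d`. Their Casoratian
`φ_d ψ_{d+1} - φ_{d+1} ψ_d` is then `-U · ∏_{i<d} -(T^(q^(i+1)) - T) (U^q V)^(q^i)`.
For `d + 1 = deg π` the coefficients `T^(q^(i+1)) - T` survive modulo `π`, since `π ∣ T^(q^n) - T`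
forces `deg π ∣ n`. Hence a common factor of `φ̄_{d+1}` and `ψ̄_{d+1}` divides a monomial in `U, V`.
But neither `U` nor `V` divides `φ̄_n`: `φ_n(0, 1)` is a power of `-T^q`, which is nonzero modulo
`π ≠ T`, and `φ_n(1, 0) = 1`.
-/

section Casoratian

variable {R : Type*} [CommRing R]

def casoratian (x y : ℕ → R) (d : ℕ) : R :=
  x d * y (d + 1) - x (d + 1) * y d

theorem casoratian_succ {x y a b : ℕ → R}
    (hx : ∀ d, x (d + 2) = a d * x (d + 1) + b d * x d)
    (hy : ∀ d, y (d + 2) = a d * y (d + 1) + b d * y d) (d : ℕ) :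
    casoratian x y (d + 1) = -b d * casoratian x y d := by
  unfold casoratian
  rw [hx, hy]
  ring

theorem casoratian_eq_prod {x y a b : ℕ → R}
    (hx : ∀ d, x (d + 2) = a d * x (d + 1) + b d * x d)
    (hy : ∀ d, y (d + 2) = a d * y (d + 1) + b d * y d) (d : ℕ) :
    casoratian x y d = (∏ i ∈ Finset.range d, -b i) * casoratian x y 0 := by
  induction d with
  | zero => simp
  | succ d ih => rw [casoratian_succ hx hy, ih, Finset.prod_range_succ]; ring

end Casoratian

namespace MvPolynomial

variable {R S σ : Type*} [CommSemiring R] [CommSemiring S]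

theorem pderiv_pow_eq_zero_of_natCast_eq_zero {n : ℕ} (hn : (n : R) = 0) (i : σ)
    (g : MvPolynomial σ R) : pderiv i (g ^ n) = 0 := by
  rw [pderiv_pow, ← map_natCast (C : R →+* MvPolynomial σ R), hn, map_zero, zero_mul, zero_mul]

theorem not_X_dvd_map_of_eval_ne_zero (f : R →+* S) {p : MvPolynomial σ R} {x : σ → R} {i : σ}
    (hx : x i = 0) (h : f (eval x p) ≠ 0) : ¬ X i ∣ map f p := by
  rintro ⟨g, hg⟩
  rw [eval₂_comp, ← eval_map, hg] at h
  simp [hx] at h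

end MvPolynomial

theorem Irreducible.not_dvd_X_pow_card_pow_sub_X {k : Type*} [Field k] {π : Polynomial k}
    (hπ : Irreducible π) {n : ℕ} (hn₀ : 0 < n) (hn : n < π.natDegree) :
    ¬ π ∣ Polynomial.X ^ Nat.card k ^ n - Polynomial.X :=
  fun h ↦ (Nat.le_of_dvd hn₀ (hπ.natDegree_dvd_of_dvd_X_pow_card_pow_sub_X h)).not_gt hn

section PhiPsi

variable {Fq : Type} [Field Fq] {q : ℕ}

theorem phiPoly_add_two (d : ℕ) :
    phiPoly Fq q (d + 2) =
      (X 0 - C (Polynomial.X ^ q) * X 1) ^ q ^ (d + 1) * phiPoly Fq q (d + 1) +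
        C (Polynomial.X ^ q ^ (d + 1) - Polynomial.X) * (X 0 ^ q * X 1) ^ q ^ d *
          phiPoly Fq q d := by
  rw [phiPoly]
  ring

theorem psiPoly_add_two (hq : (q : Fq) = 0) (d : ℕ) :
    psiPoly Fq q (d + 2) =
      (X 0 - C (Polynomial.X ^ q) * X 1) ^ q ^ (d + 1) * psiPoly Fq q (d + 1) +
        C (Polynomial.X ^ q ^ (d + 1) - Polynomial.X) * (X 0 ^ q * X 1) ^ q ^ d *
          psiPoly Fq q d := by
  have hq' : (q : Polynomial Fq) = 0 := by simpa using congrArg Polynomial.C hq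
  have hL : pderiv 0 ((X 0 - C (Polynomial.X ^ q) * X 1 : MvPolynomial (Fin 2) (Polynomial Fq))
      ^ q ^ (d + 1)) = 0 :=
    pderiv_pow_eq_zero_of_natCast_eq_zero (by simp [hq']) _ _
  have hM : pderiv 0 ((X 0 ^ q * X 1 : MvPolynomial (Fin 2) (Polynomial Fq)) ^ q ^ d) = 0 := by
    rw [pderiv_pow, Derivation.leibniz, pderiv_pow_eq_zero_of_natCast_eq_zero hq',
      pderiv_X_of_ne (by decide)]
    simp
  simp only [psiPoly, phiPoly_add_two, map_add, Derivation.leibniz, hL, hM, pderiv_C, smul_eq_mul]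
  ring

theorem casoratian_phiPoly_psiPoly (hq : (q : Fq) = 0) (d : ℕ) :
    casoratian (phiPoly Fq q) (psiPoly Fq q) d =
      (∏ i ∈ Finset.range d,
        -(C (Polynomial.X ^ q ^ (i + 1) - Polynomial.X) * (X 0 ^ q * X 1) ^ q ^ i)) * -X 0 := by
  rw [casoratian_eq_prod phiPoly_add_two (psiPoly_add_two hq)]
  simp [casoratian, psiPoly, phiPoly]

theorem eval_phiPoly_one_zero (hq₀ : q ≠ 0) (n : ℕ) :
    eval ![1, 0] (phiPoly Fq q n) = 1 := by
  induction n using Nat.twoStepInduction with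
  | zero => simp [phiPoly]
  | one => simp [phiPoly]
  | more n _ ih => simp [phiPoly_add_two, ih, hq₀]

theorem eval_phiPoly_zero_one (hq₀ : q ≠ 0) (n : ℕ) :
    eval ![0, 1] (phiPoly Fq q n) = (-Polynomial.X ^ q) ^ ∑ i ∈ Finset.range n, q ^ i := by
  induction n using Nat.twoStepInduction with
  | zero => simp [phiPoly]
  | one => simp [phiPoly]
  | more n _ ih =>
    simp [phiPoly_add_two, ih, hq₀, Finset.sum_range_succ _ (n + 1), pow_add, mul_comm]

end PhiPsi

section Reduction

variable {Fq K : Type} [Field Fq] [Field K] {q : ℕ} (f : Polynomial Fq →+* K)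

theorem not_X_zero_dvd_map_phiPoly (hq₀ : q ≠ 0) (hT : f Polynomial.X ≠ 0) (n : ℕ) :
    ¬ X 0 ∣ map f (phiPoly Fq q n) :=
  not_X_dvd_map_of_eval_ne_zero f (x := ![0, 1]) rfl (by simp [eval_phiPoly_zero_one hq₀, hT])

theorem not_X_one_dvd_map_phiPoly (hq₀ : q ≠ 0) (n : ℕ) : ¬ X 1 ∣ map f (phiPoly Fq q n) :=
  not_X_dvd_map_of_eval_ne_zero f (x := ![1, 0]) rfl (by simp [eval_phiPoly_one_zero hq₀])

theorem isRelPrime_map_phiPoly_casoratian (hq : (q : Fq) = 0) (hq₀ : q ≠ 0)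
    (hT : f Polynomial.X ≠ 0) {d : ℕ}
    (hfrob : ∀ i < d, f (Polynomial.X ^ q ^ (i + 1) - Polynomial.X) ≠ 0) (n : ℕ) :
    IsRelPrime (map f (phiPoly Fq q n)) (map f (casoratian (phiPoly Fq q) (psiPoly Fq q) d)) := by
  have hU : IsRelPrime (map f (phiPoly Fq q n)) (X 0) :=
    (X_prime.irreducible.isRelPrime_iff_not_dvd.2 (not_X_zero_dvd_map_phiPoly f hq₀ hT n)).symm
  have hV : IsRelPrime (map f (phiPoly Fq q n)) (X 1) :=
    (X_prime.irreducible.isRelPrime_iff_not_dvd.2 (not_X_one_dvd_map_phiPoly f hq₀ n)).symm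
  rw [casoratian_phiPoly_psiPoly hq]
  simp only [map_mul, map_neg, map_prod, map_pow, map_C, map_X]
  refine (IsRelPrime.prod_right fun i hi ↦ IsRelPrime.neg_right ?_).mul_right hU.neg_right
  exact ((hfrob i (Finset.mem_range.1 hi)).isUnit.map C).isRelPrime_right.mul_right
    ((hU.pow_right.mul_right hV).pow_right)

end Reduction

theorem phiPoly_psiPoly_no_common_factor_general
    (q : ℕ)
    (Fq : Type) [Field Fq] [Fintype Fq] (hcard : Fintype.card Fq = q)
    (π : Polynomial Fq) (hmonic : π.Monic) (hirr : Irreducible π)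
    (hne : π ≠ Polynomial.X) :
    ∀ a : MvPolynomial (Fin 2) (Polynomial Fq ⧸ Ideal.span {π}),
      a ∣ MvPolynomial.map (Ideal.Quotient.mk (Ideal.span {π})) (phiPoly Fq q π.natDegree) →
      a ∣ MvPolynomial.map (Ideal.Quotient.mk (Ideal.span {π})) (psiPoly Fq q π.natDegree) →
      IsUnit a := by
  intro a hφ hψ
  have := PrincipalIdealRing.isMaximal_of_irreducible hirr
  let := Ideal.Quotient.field (Ideal.span {π})
  set f := Ideal.Quotient.mk (Ideal.span {π})
  have hf (g : Polynomial Fq) : f g ≠ 0 ↔ ¬ π ∣ g :=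
    (Ideal.Quotient.eq_zero_iff_mem.trans Ideal.mem_span_singleton).not
  have hq : (q : Fq) = 0 := hcard ▸ FiniteField.cast_card_eq_zero Fq
  have hq₀ : q ≠ 0 := hcard ▸ Fintype.card_ne_zero
  have hT : f Polynomial.X ≠ 0 := (hf _).2 fun h ↦ hne <| Polynomial.eq_of_monic_of_associated
    hmonic Polynomial.monic_X (hirr.associated_of_dvd Polynomial.irreducible_X h)
  obtain ⟨d, hd⟩ := Nat.exists_eq_add_one_of_ne_zero hirr.natDegree_pos.ne'
  have hfrob : ∀ i < d, f (Polynomial.X ^ q ^ (i + 1) - Polynomial.X) ≠ 0 := fun i hi ↦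
    (hf _).2 (by simpa [hcard] using hirr.not_dvd_X_pow_card_pow_sub_X i.succ_pos (by omega))
  rw [hd] at hφ hψ
  refine isRelPrime_map_phiPoly_casoratian f hq hq₀ hT hfrob (d + 1) hφ ?_
  rw [casoratian, map_sub, map_mul, map_mul]
  exact dvd_sub (dvd_mul_of_dvd_right hψ _) (dvd_mul_of_dvd_left hφ _)

/-- With `d = deg π` and `ψ_d := −U·(∂φ_d/∂U)`, the reductions `ψ̄_d` and `φ̄_d` modulo `𝔭`
share no common non-unit factor in `𝔽_𝔭[U,V]`: every common divisor is a unit. -/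
theorem phiPoly_psiPoly_no_common_factor (p r q : ℕ) (hp : p.Prime) (hodd : Odd p)
    (hr : 0 < r) (hq : q = p ^ r)
    (Fq : Type) [Field Fq] [Fintype Fq] (hcard : Fintype.card Fq = q)
    (π : Polynomial Fq) (hmonic : π.Monic) (hirr : Irreducible π)
    (hne : π ≠ Polynomial.X) :
    ∀ a : MvPolynomial (Fin 2) (Polynomial Fq ⧸ Ideal.span {π}),
      a ∣ MvPolynomial.map (Ideal.Quotient.mk (Ideal.span {π})) (phiPoly Fq q π.natDegree) →
      a ∣ MvPolynomial.map (Ideal.Quotient.mk (Ideal.span {π})) (psiPoly Fq q π.natDegree) →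
      IsUnit a :=
  phiPoly_psiPoly_no_common_factor_general q Fq hcard π hmonic hirr hne
end
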